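/- arXiv:2011.09314 — 4 statements merged into one kernel-verified Lean document; each statement's English description precedes it below -/
import Mathlib

section
/- In any finite rooted tree whose nodes are colored black or white, if every white node has at least two children and every leaf is black, then the number of white nodes is strictly less than the number of black nodes. -/
/-- In any finite rooted tree whose nodes are colored black or white, if every
white node has at least two children and every leaf is black, then the number
of white nodes is strictly less than the number of black nodes. -/
theorem stmt0 {V : Type} [Fintype V] [DecidableEq V]
    (root : V) (parent : V → V)
    (hroot : parent root = root)
    (hreach : ∀ v : V, ∃ n : ℕ, parent^[n] v = root)
    (black : V → Bool)
    (hwhite : ∀ v : V, black v = false →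
      2 ≤ (Finset.univ.filter (fun w => w ≠ root ∧ parent w = v)).card)
    (hleaf : ∀ v : V,
      (Finset.univ.filter (fun w => w ≠ root ∧ parent w = v)) = ∅ → black v = true) :
    (Finset.univ.filter (fun v => black v = false)).card <
      (Finset.univ.filter (fun v => black v = true)).card := by
  classical
  set c : V → ℕ := fun v => (Finset.univ.filter (fun w => w ≠ root ∧ parent w = v)).card
    with hc
  -- sum of children counts = number of non-root vertices
  have hsum : ∑ v, c v = (Finset.univ.filter (fun w => w ≠ root)).card := by
    rw [Finset.card_eq_sum_card_fiberwise
      (f := parent) (s := Finset.univ.filter (fun w => w ≠ root)) (t := Finset.univ)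
      (fun x _ => Finset.mem_univ _)]
    simp only [hc, Finset.filter_filter]
  have hn : (Finset.univ.filter (fun w => w ≠ root)).card + 1 = Fintype.card V := by
    rw [Finset.filter_ne', Finset.card_erase_of_mem (Finset.mem_univ root)]
    have h1 : 1 ≤ Fintype.card V := Fintype.card_pos_iff.mpr ⟨root⟩
    simp only [Finset.card_univ]
    omega
  set W : Finset V := Finset.univ.filter (fun v => black v = false) with hW
  set Bk : Finset V := Finset.univ.filter (fun v => black v = true) with hBk
  set Lb : Finset V := Bk.filter (fun v => c v = 0) with hLb
  set Bn : Finset V := Bk.filter (fun v => ¬ c v = 0) with hBn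
  have hBsplit : Lb.card + Bn.card = Bk.card :=
    Finset.card_filter_add_card_filter_not (p := fun v => c v = 0)
  have htot : W.card + Bk.card = Fintype.card V := by
    have := Finset.card_filter_add_card_filter_not
      (s := (Finset.univ : Finset V)) (p := fun v => black v = false)
    simpa [hW, hBk, Finset.card_univ] using this
  have hdisj : Disjoint W Bn := by
    refine Finset.disjoint_left.mpr ?_
    intro a ha hb
    simp only [hW, Finset.mem_filter] at ha
    simp only [hBn, hBk, Finset.mem_filter] at hb
    rw [ha.2] at hb; simp at hb
  have hWsum : 2 * W.card ≤ ∑ v ∈ W, c v := by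
    calc 2 * W.card = W.card * 2 := by ring
    _ ≤ ∑ v ∈ W, c v := by
      refine Finset.card_nsmul_le_sum W c 2 ?_
      intro v hv
      simp only [hW, Finset.mem_filter] at hv
      exact hwhite v hv.2
  have hBnsum : Bn.card ≤ ∑ v ∈ Bn, c v := by
    have := Finset.card_nsmul_le_sum Bn c 1 (fun v hv => by
      simp only [hBn, Finset.mem_filter] at hv
      omega)
    simpa using this
  have hsub : ∑ v ∈ W, c v + ∑ v ∈ Bn, c v ≤ ∑ v, c v := by
    rw [← Finset.sum_union hdisj]
    exact Finset.sum_le_sum_of_subset (Finset.subset_univ _)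
  -- leaves are black, so Lb ≤ Bk, and that's already in hBsplit
  -- also whites are not leaves is implicit
  omega
end

section
/- Let Q be a Boolean query on finite S-databases that is closed under homomorphisms, and suppose that whenever D ⊨ Q there exists D* of tree-width at most w with D* ⊨ Q and a homomorphism from D* to D. If there is k ≥ 0 such that every database of tree-width at most w satisfying Q has a subdatabase with at most k facts satisfying Q, then Q is equivalent to the union of conjunctive queries given by all ≤ k-fact databases of tree-width at most w satisfying Q. -/
/-- Facts over a schema `S` with arities `arity`, with constants from `ℕ`. -/
abbrev DBFact (S : Type) (arity : S → ℕ) := Σ R : S, Fin (arity R) → ℕ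

/-- A homomorphism between databases. -/
def DBHom {S : Type} (arity : S → ℕ) (D E : Finset (DBFact S arity)) : Prop :=
  ∃ h : ℕ → ℕ, ∀ f ∈ D, (⟨f.1, h ∘ f.2⟩ : DBFact S arity) ∈ E

/-- `D` has tree-width at most `w`: it has a (rooted) tree decomposition all of
whose bags have at most `w + 1` elements. -/
def TWle {S : Type} (arity : S → ℕ) (D : Finset (DBFact S arity)) (w : ℕ) : Prop :=
  ∃ (V : Type) (_ : Fintype V) (root : V) (parent : V → V) (X : V → Finset ℕ),
    parent root = root ∧
    (∀ v : V, ∃ n : ℕ, parent^[n] v = root) ∧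
    (∀ f ∈ D, ∃ v : V, (Finset.univ.image f.2) ⊆ X v) ∧
    (∀ a : ℕ, (∃ v : V, a ∈ X v) → ∃ u : V, ∀ v : V, a ∈ X v →
      ∃ n : ℕ, parent^[n] v = u ∧ ∀ j ≤ n, a ∈ X (parent^[j] v)) ∧
    (∀ v : V, (X v).card ≤ w + 1)

/-- If `Q` is homomorphism-closed, has the tree-model property for tree-width `w`,
and every database of tree-width at most `w` satisfying `Q` has a subdatabase of
at most `k` facts satisfying `Q`, then `Q` is equivalent to the union of the
conjunctive queries given by all databases with at most `k` facts, tree-width at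
most `w`, and satisfying `Q`. -/
theorem stmt8 {S : Type} [DecidableEq S] (arity : S → ℕ)
    (Q : Finset (DBFact S arity) → Prop)
    (hhom : ∀ D E : Finset (DBFact S arity), Q D → DBHom arity D E → Q E)
    (w k : ℕ)
    (htree : ∀ D : Finset (DBFact S arity), Q D →
      ∃ Dstar : Finset (DBFact S arity), TWle arity Dstar w ∧ Q Dstar ∧ DBHom arity Dstar D)
    (hk : ∀ D : Finset (DBFact S arity), TWle arity D w → Q D →
      ∃ D' ⊆ D, D'.card ≤ k ∧ Q D') :
    ∀ D : Finset (DBFact S arity),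
      Q D ↔ ∃ D0 : Finset (DBFact S arity),
        D0.card ≤ k ∧ TWle arity D0 w ∧ Q D0 ∧ DBHom arity D0 D := by
  intro D
  constructor
  · intro hQ
    obtain ⟨Ds, hTW, hQs, hhomD⟩ := htree D hQ
    obtain ⟨D', hsub, hcard, hQ'⟩ := hk Ds hTW hQs
    refine ⟨D', hcard, ?_, hQ', ?_⟩
    · obtain ⟨V, fV, root, parent, X, h1, h2, h3, h4, h5⟩ := hTW
      exact ⟨V, fV, root, parent, X, h1, h2, fun f hf => h3 f (hsub hf), h4, h5⟩
    · obtain ⟨h, hh⟩ := hhomD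
      exact ⟨h, fun f hf => hh f (hsub hf)⟩
  · rintro ⟨D0, _, _, hQ0, hhom0⟩
    exact hhom D0 D hQ0 hhom0
end

section
/- Conversely, with notation as above: if there is k ≥ 0 such that every bounded-tree-width database D with D ⊨ Q has a subdatabase with at most k facts satisfying Q, and for each isomorphism type of a ≤ k-fact database satisfying Q we fix a derivation tree, then cost(Q) is finite (bounded by the maximum height of the finitely many fixed derivation trees). -/
/-- A permutation of ℕ mapping a finset of card ≤ N into {0,...,N-1}. -/
lemma exists_perm_lt (s : Finset ℕ) (N : ℕ) (h : s.card ≤ N) :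
    ∃ ρ : ℕ ≃ ℕ, ∀ x ∈ s, ρ x < N := by
  classical
  set t : Finset ℕ := Finset.range s.card with ht
  have hcard : t.card = s.card := Finset.card_range _
  have e1 : {x // x ∈ s} ≃ {x // x ∈ t} :=
    s.equivFin.trans (Fin.castOrderIso hcard.symm).toEquiv |>.trans t.equivFin.symm
  have hsfin : (↑s : Set ℕ).Finite := s.finite_toSet
  have htfin : (↑t : Set ℕ).Finite := t.finite_toSet
  have hsinf : ((↑s : Set ℕ)ᶜ).Infinite := hsfin.infinite_compl
  have htinf : ((↑t : Set ℕ)ᶜ).Infinite := htfin.infinite_compl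
  have : Infinite ((↑s : Set ℕ)ᶜ : Set ℕ) := hsinf.to_subtype
  have : Infinite ((↑t : Set ℕ)ᶜ : Set ℕ) := htinf.to_subtype
  obtain ⟨e2⟩ : Nonempty (((↑s : Set ℕ)ᶜ : Set ℕ) ≃ ((↑t : Set ℕ)ᶜ : Set ℕ)) :=
    inferInstance
  let e1' : ((↑s : Set ℕ) : Set ℕ) ≃ ((↑t : Set ℕ) : Set ℕ) :=
    (Equiv.subtypeEquivRight (by simp)).trans (e1.trans (Equiv.subtypeEquivRight (by simp)))
  let ρ : ℕ ≃ ℕ :=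
    (Equiv.Set.sumCompl (↑s : Set ℕ)).symm.trans
      ((e1'.sumCongr e2).trans (Equiv.Set.sumCompl (↑t : Set ℕ)))
  refine ⟨ρ, fun x hx => ?_⟩
  have hx' : x ∈ (↑s : Set ℕ) := hx
  have h1 : (Equiv.Set.sumCompl (↑s : Set ℕ)).symm x = Sum.inl ⟨x, hx'⟩ :=
    Equiv.Set.sumCompl_symm_apply_of_mem hx'
  have : ρ x = (e1' ⟨x, hx'⟩ : ℕ) := by
    simp only [ρ, Equiv.trans_apply, h1, Equiv.sumCongr_apply, Sum.map_inl,
      Equiv.Set.sumCompl_apply_inl]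
  rw [this]
  have h2 : ((e1' ⟨x, hx'⟩ : ℕ)) ∈ t := (e1' ⟨x, hx'⟩).2
  have h3 : ((e1' ⟨x, hx'⟩ : ℕ)) < s.card := Finset.mem_range.mp h2
  omega

/-- Converse direction: `DT` is an abstract type of derivation trees, with
underlying database `db T` and `height T`.  Assume: (i) `Q D` holds iff some
derivation tree has `db T = D`; (ii) a derivation tree for a subdatabase
`D' ⊆ D` is also one for `D` (of no greater height); (iii) derivation-tree
heights are invariant under isomorphisms (bijective renamings of constants).
If every bounded-tree-width database (in the class `B`) satisfying `Q` has a
subdatabase with at most `k` facts satisfying `Q`, then `cost(Q)` is finite: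
some `n` bounds the minimal derivation-tree height of every `D ∈ B` with
`Q D`. -/
theorem stmt14 {S : Type} [Fintype S] [DecidableEq S] (arity : S → ℕ)
    (Q : Finset (DBFact S arity) → Prop) (B : Finset (DBFact S arity) → Prop)
    (DT : Type) (db : DT → Finset (DBFact S arity)) (height : DT → ℕ)
    (hex : ∀ D : Finset (DBFact S arity), Q D ↔ ∃ T : DT, db T = D)
    (hmono : ∀ (T : DT) (D : Finset (DBFact S arity)), db T ⊆ D →
      ∃ T' : DT, db T' = D ∧ height T' ≤ height T)
    (hiso : ∀ (ρ : ℕ ≃ ℕ) (T : DT),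
      ∃ T' : DT, db T' = (db T).image (fun f => (⟨f.1, ρ ∘ f.2⟩ : DBFact S arity)) ∧
        height T' ≤ height T)
    (k : ℕ)
    (hk : ∀ D : Finset (DBFact S arity), B D → Q D →
      ∃ D' ⊆ D, D'.card ≤ k ∧ Q D') :
    ∃ n : ℕ, ∀ D : Finset (DBFact S arity), B D → Q D →
      ∃ T : DT, db T = D ∧ height T ≤ n := by
  classical
  -- maximum arity and bound on number of constants
  set A : ℕ := Finset.univ.sup arity with hA
  set N : ℕ := k * A with hN
  -- the finite set of "canonical" facts, with constants < N
  let g : (Σ R : S, Fin (arity R) → Fin N) → DBFact S arity :=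
    fun f => ⟨f.1, fun i => (f.2 i : ℕ)⟩
  let allFacts : Finset (DBFact S arity) := Finset.univ.image g
  -- height assigned to each candidate database
  let hC : Finset (DBFact S arity) → ℕ := fun C =>
    if h : ∃ T : DT, db T = C then height h.choose else 0
  refine ⟨allFacts.powerset.sup hC, fun D hB hQ => ?_⟩
  obtain ⟨D', hsub, hcard, hQ'⟩ := hk D hB hQ
  obtain ⟨T, hT⟩ := (hex D').mp hQ'
  -- the constants of D'
  set s : Finset ℕ := D'.biUnion (fun f => Finset.image f.2 Finset.univ) with hs
  have hscard : s.card ≤ N := by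
    calc s.card ≤ ∑ f ∈ D', (Finset.image f.2 Finset.univ).card :=
          Finset.card_biUnion_le
      _ ≤ ∑ _f ∈ D', A := by
          refine Finset.sum_le_sum fun f _ => ?_
          calc (Finset.image f.2 Finset.univ).card ≤ (Finset.univ : Finset (Fin (arity f.1))).card :=
                Finset.card_image_le
            _ = arity f.1 := Finset.card_univ.trans (Fintype.card_fin _)
            _ ≤ A := Finset.le_sup (Finset.mem_univ _)
      _ = D'.card * A := by rw [Finset.sum_const, smul_eq_mul]
      _ ≤ k * A := Nat.mul_le_mul_right _ hcard
  obtain ⟨ρ, hρ⟩ := exists_perm_lt s N hscard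
  set C : Finset (DBFact S arity) :=
    D'.image (fun f => (⟨f.1, ρ ∘ f.2⟩ : DBFact S arity)) with hCdef
  -- C is a candidate
  have hCmem : C ∈ allFacts.powerset := by
    rw [Finset.mem_powerset]
    intro f hf
    rw [hCdef, Finset.mem_image] at hf
    obtain ⟨f0, hf0, rfl⟩ := hf
    have hlt : ∀ i, ρ (f0.2 i) < N := fun i => hρ _ (by
      rw [hs, Finset.mem_biUnion]
      exact ⟨f0, hf0, Finset.mem_image.mpr ⟨i, Finset.mem_univ _, rfl⟩⟩)
    refine Finset.mem_image.mpr ⟨⟨f0.1, fun i => ⟨ρ (f0.2 i), hlt i⟩⟩, Finset.mem_univ _, rfl⟩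
  -- there is a derivation tree for C
  obtain ⟨T1, hT1, _⟩ := hiso ρ T
  rw [hT] at hT1
  have hCex : ∃ T' : DT, db T' = C := ⟨T1, hT1⟩
  -- the chosen tree for C
  have hT2 : db hCex.choose = C := hCex.choose_spec
  have hT2h : height hCex.choose = hC C := by simp only [hC, dif_pos hCex]
  have hle : hC C ≤ allFacts.powerset.sup hC := Finset.le_sup hCmem
  -- map it back to D'
  obtain ⟨T3, hT3, hT3h⟩ := hiso ρ.symm hCex.choose
  rw [hT2] at hT3
  have hback : C.image (fun f => (⟨f.1, ρ.symm ∘ f.2⟩ : DBFact S arity)) = D' := by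
    rw [hCdef, Finset.image_image]
    refine Finset.image_congr (fun f _ => ?_) |>.trans Finset.image_id
    show (⟨f.1, ρ.symm ∘ (ρ ∘ f.2)⟩ : DBFact S arity) = id f
    exact Sigma.ext rfl (heq_of_eq (funext fun i => ρ.symm_apply_apply _))
  rw [hback] at hT3
  -- extend to D
  obtain ⟨T4, hT4, hT4h⟩ := hmono T3 D (hT3 ▸ hsub)
  exact ⟨T4, hT4, le_trans hT4h (le_trans hT3h (hT2h ▸ hle))⟩
end

section
/- With Q', Q₁, Q₂ as in the previous statement: if Q₁ is not contained in Q₂, witnessed by an S-database D* with D* ⊨ Q₁ and D* ⊭ Q₂, then for every k ≥ 1 the S'-database D_k extending D* with fresh elements a₀,…,a_k and facts B(a₀), R(a₀,a₁), …, R(a_{k−1},a_k), A(a_k) satisfies D_k ⊨ Q', while every subdatabase of D_k obtained by removing at least one of the fresh path facts fails Q' (provided D* ⊭ Q₂ is preserved under restriction, i.e., Q₂ is closed under homomorphisms and the fresh elements are disjoint from adom(D*)). Consequently Q' is not equivalent to any finite UCQ. -/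
/-- The three extra relation symbols `R/2`, `A/1`, `B/1`. -/
inductive Extra where
  | r | a | b
  deriving DecidableEq

/-- Facts over the schema `S`. -/
abbrev FactS (S : Type) (arity : S → ℕ) := Σ R : S, Fin (arity R) → ℕ

/-- Arities over the extended schema `S' = S ∪ {R/2, A/1, B/1}`. -/
def arity' {S : Type} (arity : S → ℕ) : S ⊕ Extra → ℕ
  | Sum.inl R => arity R
  | Sum.inr Extra.r => 2
  | Sum.inr Extra.a => 1
  | Sum.inr Extra.b => 1

/-- Facts over the extended schema `S'`. -/
abbrev Fact' (S : Type) (arity : S → ℕ) := Σ R : S ⊕ Extra, Fin (arity' arity R) → ℕ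

/-- The restriction `D[S]` of an `S'`-database to the schema `S`. -/
def restrict {S : Type} [DecidableEq S] (arity : S → ℕ)
    (D' : Finset (Fact' S arity)) : Finset (FactS S arity) :=
  D'.biUnion fun f =>
    match f with
    | ⟨Sum.inl R, t⟩ => {⟨R, t⟩}
    | ⟨Sum.inr _, _⟩ => ∅

/-- Some element satisfying `B` reaches, along an `R`-path, an element
satisfying `A`. -/
def HasPath {S : Type} (arity : S → ℕ) (D' : Finset (Fact' S arity)) : Prop :=
  ∃ (k : ℕ) (c : Fin (k + 1) → ℕ),
    (⟨Sum.inr Extra.b, ![c 0]⟩ : Fact' S arity) ∈ D' ∧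
    (⟨Sum.inr Extra.a, ![c (Fin.last k)]⟩ : Fact' S arity) ∈ D' ∧
    ∀ i : Fin k, (⟨Sum.inr Extra.r, ![c i.castSucc, c i.succ]⟩ : Fact' S arity) ∈ D'

/-- The combined query `Q'` on `S'`-databases. -/
def Qprime {S : Type} [DecidableEq S] (arity : S → ℕ)
    (Q₁ Q₂ : Finset (FactS S arity) → Prop) (D' : Finset (Fact' S arity)) : Prop :=
  Q₂ (restrict arity D') ∨ (Q₁ (restrict arity D') ∧ HasPath arity D')

/-- A homomorphism between `S'`-databases. -/
def Hom' {S : Type} (arity : S → ℕ) (D E : Finset (Fact' S arity)) : Prop :=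
  ∃ h : ℕ → ℕ, ∀ f ∈ D, (⟨f.1, h ∘ f.2⟩ : Fact' S arity) ∈ E

/-- The active domain of an `S`-database. -/
def adomS {S : Type} (arity : S → ℕ) (D : Finset (FactS S arity)) (x : ℕ) : Prop :=
  ∃ f ∈ D, ∃ i : Fin (arity f.1), f.2 i = x

/-- An `S`-database viewed as an `S'`-database. -/
def embed {S : Type} [DecidableEq S] (arity : S → ℕ)
    (D : Finset (FactS S arity)) : Finset (Fact' S arity) :=
  D.image fun f => (⟨Sum.inl f.1, f.2⟩ : Fact' S arity)

/-- The fresh path facts `B(c 0), R(c 0, c 1), …, R(c (k-1), c k), A(c k)`. -/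
def pathFacts {S : Type} [DecidableEq S] (arity : S → ℕ) (k : ℕ)
    (c : Fin (k + 1) → ℕ) : Finset (Fact' S arity) :=
  {(⟨Sum.inr Extra.b, ![c 0]⟩ : Fact' S arity),
   (⟨Sum.inr Extra.a, ![c (Fin.last k)]⟩ : Fact' S arity)} ∪
    Finset.image (fun i : Fin k =>
      (⟨Sum.inr Extra.r, ![c i.castSucc, c i.succ]⟩ : Fact' S arity)) Finset.univ

/-!
`D_k[S] = D*`, so `D_k ⊨ Q'` through its path, while a subdatabase `E` of `D_k` missing a fresh fact has
`E[S] ⊆ D*`, hence `E ⊭ Q₂` by homomorphism closure, and has no `B`-to-`A` path: by injectivity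
of the fresh elements, any such path in `E` must retrace the whole fresh path. So every witness
of `Q'` inside `D_k` contains the `k` fresh `R`-facts, which no UCQ with disjuncts of bounded
size can guarantee.
-/

section Database

variable {S : Type} [DecidableEq S] (arity : S → ℕ)

theorem mem_restrict {D' : Finset (Fact' S arity)} {R : S} {t : Fin (arity R) → ℕ} :
    (⟨R, t⟩ : FactS S arity) ∈ restrict arity D' ↔ (⟨Sum.inl R, t⟩ : Fact' S arity) ∈ D' := by
  simp only [restrict, Finset.mem_biUnion]
  constructor
  · rintro ⟨⟨R' | e, u⟩, hf, hm⟩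
    · obtain ⟨rfl, h⟩ := Sigma.mk.inj_iff.mp (Finset.mem_singleton.mp hm)
      cases h
      exact hf
    · simp at hm
  · exact fun h => ⟨_, h, Finset.mem_singleton_self _⟩

theorem restrict_mono {D E : Finset (Fact' S arity)} (h : D ⊆ E) :
    restrict arity D ⊆ restrict arity E :=
  Finset.biUnion_subset_biUnion_of_subset_left _ h

theorem restrict_union (D E : Finset (Fact' S arity)) :
    restrict arity (D ∪ E) = restrict arity D ∪ restrict arity E :=
  Finset.union_biUnion

theorem restrict_embed (D : Finset (FactS S arity)) : restrict arity (embed arity D) = D := by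
  ext ⟨R, t⟩
  simp only [mem_restrict, embed, Finset.mem_image]
  constructor
  · rintro ⟨⟨R', t'⟩, h, he⟩
    injection he with hR ht
    cases Sum.inl_injective hR
    cases ht
    exact h
  · exact fun h => ⟨_, h, rfl⟩

theorem inr_notMem_embed (D : Finset (FactS S arity)) {e : Extra}
    (t : Fin (arity' arity (Sum.inr e)) → ℕ) :
    (⟨Sum.inr e, t⟩ : Fact' S arity) ∉ embed arity D := by
  simp only [embed, Finset.mem_image, not_exists, not_and]
  exact fun _ _ h => nomatch congrArg Sigma.fst h

theorem mem_pathFacts {k : ℕ} {c : Fin (k + 1) → ℕ} {f : Fact' S arity} :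
    f ∈ pathFacts arity k c ↔
      f = ⟨Sum.inr Extra.b, ![c 0]⟩ ∨ f = ⟨Sum.inr Extra.a, ![c (Fin.last k)]⟩ ∨
      ∃ i : Fin k, f = ⟨Sum.inr Extra.r, ![c i.castSucc, c i.succ]⟩ := by
  simp [pathFacts, eq_comm]

theorem restrict_pathFacts (k : ℕ) (c : Fin (k + 1) → ℕ) :
    restrict arity (pathFacts arity k c) = ∅ := by
  refine Finset.eq_empty_of_forall_notMem fun ⟨R, t⟩ h => ?_
  rcases (mem_pathFacts arity).mp ((mem_restrict arity).mp h) with h | h | ⟨i, h⟩ <;>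
    exact nomatch congrArg Sigma.fst h

theorem restrict_embed_union_pathFacts (D : Finset (FactS S arity)) (k : ℕ)
    (c : Fin (k + 1) → ℕ) :
    restrict arity (embed arity D ∪ pathFacts arity k c) = D := by
  rw [restrict_union, restrict_embed, restrict_pathFacts, Finset.union_empty]

theorem hasPath_pathFacts (k : ℕ) (c : Fin (k + 1) → ℕ) :
    HasPath arity (pathFacts arity k c) :=
  ⟨k, c, by simp [pathFacts], by simp [pathFacts], fun i => by simp [pathFacts]⟩

omit [DecidableEq S] in
theorem HasPath.mono {D E : Finset (Fact' S arity)} (h : HasPath arity D) (hDE : D ⊆ E) :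
    HasPath arity E :=
  let ⟨k, c, hB, hA, hR⟩ := h
  ⟨k, c, hDE hB, hDE hA, fun i => hDE (hR i)⟩

end Database

section FreshPath

variable {S : Type} [DecidableEq S] {arity : S → ℕ} {D : Finset (FactS S arity)} {k : ℕ}
  {c : Fin (k + 1) → ℕ}

theorem mem_pathFacts_of_inr_mem_embed_union {e : Extra} {t : Fin (arity' arity (Sum.inr e)) → ℕ}
    (h : (⟨Sum.inr e, t⟩ : Fact' S arity) ∈ embed arity D ∪ pathFacts arity k c) :
    (⟨Sum.inr e, t⟩ : Fact' S arity) ∈ pathFacts arity k c :=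
  (Finset.mem_union.mp h).resolve_left (inr_notMem_embed arity D t)

theorem eq_of_b_mem_embed_union {x : ℕ}
    (h : (⟨Sum.inr Extra.b, ![x]⟩ : Fact' S arity) ∈ embed arity D ∪ pathFacts arity k c) :
    x = c 0 := by
  rcases (mem_pathFacts arity).mp (mem_pathFacts_of_inr_mem_embed_union h) with h | h | ⟨i, h⟩
  · injection h with _ h
    exact congrFun h 0
  · exact nomatch congrArg Sigma.fst h
  · exact nomatch congrArg Sigma.fst h

theorem eq_of_a_mem_embed_union {x : ℕ}
    (h : (⟨Sum.inr Extra.a, ![x]⟩ : Fact' S arity) ∈ embed arity D ∪ pathFacts arity k c) :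
    x = c (Fin.last k) := by
  rcases (mem_pathFacts arity).mp (mem_pathFacts_of_inr_mem_embed_union h) with h | h | ⟨i, h⟩
  · exact nomatch congrArg Sigma.fst h
  · injection h with _ h
    exact congrFun h 0
  · exact nomatch congrArg Sigma.fst h

theorem exists_eq_of_r_mem_embed_union {x y : ℕ}
    (h : (⟨Sum.inr Extra.r, ![x, y]⟩ : Fact' S arity) ∈ embed arity D ∪ pathFacts arity k c) :
    ∃ i : Fin k, x = c i.castSucc ∧ y = c i.succ := by
  rcases (mem_pathFacts arity).mp (mem_pathFacts_of_inr_mem_embed_union h) with h | h | ⟨i, h⟩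
  · exact nomatch congrArg Sigma.fst h
  · exact nomatch congrArg Sigma.fst h
  · injection h with _ h
    exact ⟨i, congrFun h 0, congrFun h 1⟩

theorem pathFacts_subset_of_hasPath (hc : Function.Injective c) {E : Finset (Fact' S arity)}
    (hE : E ⊆ embed arity D ∪ pathFacts arity k c) (hpath : HasPath arity E) :
    pathFacts arity k c ⊆ E := by
  obtain ⟨m, d, hB, hA, hR⟩ := hpath
  have track : ∀ t (ht : t ≤ m), ∃ htk : t ≤ k, d ⟨t, by omega⟩ = c ⟨t, by omega⟩ := by
    intro t ht
    induction t with
    | zero => exact ⟨Nat.zero_le k, eq_of_b_mem_embed_union (hE hB)⟩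
    | succ t ih =>
      obtain ⟨_, hdt⟩ := ih (by omega)
      obtain ⟨i, hx, hy⟩ := exists_eq_of_r_mem_embed_union (hE (hR ⟨t, ht⟩))
      have hit : (i : ℕ) = t := by
        simpa using congrArg Fin.val (hc (hx.symm.trans hdt))
      exact ⟨by omega, hy.trans (congrArg c (Fin.ext (by simp [hit])))⟩
  have hmk : m = k := by
    obtain ⟨_, hdm⟩ := track m le_rfl
    simpa using congrArg Fin.val (hc (hdm.symm.trans (eq_of_a_mem_embed_union (hE hA))))
  subst hmk
  obtain rfl : d = c := funext fun i => (track i (by omega)).2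
  intro f hf
  rcases (mem_pathFacts arity).mp hf with rfl | rfl | ⟨i, rfl⟩
  exacts [hB, hA, hR i]

theorem le_card_pathFacts (hc : Function.Injective c) : k ≤ (pathFacts arity k c).card := by
  have hinj : Function.Injective fun i : Fin k =>
      (⟨Sum.inr Extra.r, ![c i.castSucc, c i.succ]⟩ : Fact' S arity) := by
    intro i j hij
    have h0 := congrFun (eq_of_heq (Sigma.mk.inj_iff.mp hij).2) 0
    exact Fin.castSucc_injective _ (hc h0)
  calc k = (Finset.univ.image fun i : Fin k =>
          (⟨Sum.inr Extra.r, ![c i.castSucc, c i.succ]⟩ : Fact' S arity)).card := by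
        rw [Finset.card_image_of_injective _ hinj, Finset.card_univ, Fintype.card_fin]
    _ ≤ (pathFacts arity k c).card := Finset.card_le_card Finset.subset_union_right

end FreshPath

theorem monotone_of_hom_closed {S : Type} {arity : S → ℕ} {Q : Finset (FactS S arity) → Prop}
    (hQ : ∀ D E : Finset (FactS S arity), Q D →
      (∃ h : ℕ → ℕ, ∀ f ∈ D, (⟨f.1, h ∘ f.2⟩ : FactS S arity) ∈ E) → Q E) :
    Monotone Q :=
  fun _ _ hDE hD => hQ _ _ hD ⟨id, fun _ hf => hDE hf⟩

section Qprime

variable {S : Type} [DecidableEq S] {arity : S → ℕ} {Q₁ Q₂ : Finset (FactS S arity) → Prop}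


theorem Qprime_embed_union_pathFacts {D : Finset (FactS S arity)} (hD : Q₁ D) (k : ℕ)
    (c : Fin (k + 1) → ℕ) :
    Qprime arity Q₁ Q₂ (embed arity D ∪ pathFacts arity k c) :=
  Or.inr ⟨by rwa [restrict_embed_union_pathFacts],
    (hasPath_pathFacts arity k c).mono arity Finset.subset_union_right⟩

theorem pathFacts_subset_of_Qprime (hQ₂ : Monotone Q₂)
    {D : Finset (FactS S arity)} (hD : ¬ Q₂ D) {k : ℕ} {c : Fin (k + 1) → ℕ}
    (hc : Function.Injective c) {E : Finset (Fact' S arity)}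
    (hE : E ⊆ embed arity D ∪ pathFacts arity k c) (hQ : Qprime arity Q₁ Q₂ E) :
    pathFacts arity k c ⊆ E := by
  rcases hQ with hE₂ | ⟨-, hpath⟩
  · have hsub : restrict arity E ⊆ D := by
      simpa only [restrict_embed_union_pathFacts] using restrict_mono arity hE
    exact absurd (hQ₂ hsub hE₂) hD
  · exact pathFacts_subset_of_hasPath hc hE hpath

end Qprime

theorem exists_subset_card_le_of_iff_hom {S : Type} [DecidableEq S] {arity : S → ℕ}
    {Q : Finset (Fact' S arity) → Prop} {q : Finset (Finset (Fact' S arity))}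
    (hq : ∀ D', Q D' ↔ ∃ p ∈ q, Hom' arity p D') {D' : Finset (Fact' S arity)} (hD' : Q D') :
    ∃ E ⊆ D', E.card ≤ q.sup Finset.card ∧ Q E := by
  obtain ⟨p, hp, h, hh⟩ := (hq D').mp hD'
  refine ⟨p.image fun f => ⟨f.1, h ∘ f.2⟩, ?_, ?_, ?_⟩
  · simpa [Finset.image_subset_iff] using hh
  · exact Finset.card_image_le.trans (Finset.le_sup hp)
  · exact (hq _).mpr ⟨p, hp, h, fun f hf => Finset.mem_image_of_mem _ hf⟩

/-- If `Q₁` is not contained in `Q₂`, witnessed by `Dstar ⊨ Q₁`, `Dstar ⊭ Q₂`,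
with `Q₂` closed under homomorphisms, then for every `k ≥ 1` the database `D_k`
obtained by adding a fresh `B`-to-`A` `R`-path of length `k` satisfies `Q'`,
while removing any one of the fresh path facts falsifies `Q'`; consequently `Q'`
is not equivalent to any finite UCQ. -/
theorem stmt19 {S : Type} [DecidableEq S] (arity : S → ℕ)
    (Q₁ Q₂ : Finset (FactS S arity) → Prop)
    (hQ₂hom : ∀ D E : Finset (FactS S arity), Q₂ D →
      (∃ h : ℕ → ℕ, ∀ f ∈ D, (⟨f.1, h ∘ f.2⟩ : FactS S arity) ∈ E) → Q₂ E)
    (Dstar : Finset (FactS S arity))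
    (hD1 : Q₁ Dstar) (hD2 : ¬ Q₂ Dstar) :
    (∀ k : ℕ, 1 ≤ k → ∀ c : Fin (k + 1) → ℕ, Function.Injective c →
      (∀ i : Fin (k + 1), ¬ adomS arity Dstar (c i)) →
      Qprime arity Q₁ Q₂ (embed arity Dstar ∪ pathFacts arity k c) ∧
      ∀ f ∈ pathFacts arity k c,
        ¬ Qprime arity Q₁ Q₂ ((embed arity Dstar ∪ pathFacts arity k c).erase f)) ∧
    ¬ ∃ q : Finset (Finset (Fact' S arity)),
        ∀ D' : Finset (Fact' S arity),
          Qprime arity Q₁ Q₂ D' ↔ ∃ p ∈ q, Hom' arity p D' := by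
  have hQ₂ : Monotone Q₂ := monotone_of_hom_closed hQ₂hom
  refine ⟨fun k _ c hc _ => ⟨Qprime_embed_union_pathFacts hD1 k c, fun f hf hQ => ?_⟩, ?_⟩
  · exact Finset.notMem_erase f _
      (pathFacts_subset_of_Qprime hQ₂ hD2 hc (Finset.erase_subset f _) hQ hf)
  · rintro ⟨q, hq⟩
    set K := q.sup Finset.card + 1
    obtain ⟨E, hE, hcard, hQE⟩ := exists_subset_card_le_of_iff_hom hq
      (Qprime_embed_union_pathFacts (Q₂ := Q₂) hD1 K Fin.val)
    have hpath := pathFacts_subset_of_Qprime hQ₂ hD2 Fin.val_injective hE hQE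
    have hK : K ≤ E.card :=
      (le_card_pathFacts (arity := arity) Fin.val_injective).trans (Finset.card_le_card hpath)
    omega
end
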